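/- Let K_1 ⊆ ℝ^n, K_2 ⊆ ℝ^m be proper cones and A an m×n matrix. If A + B is (K_1,K_2)-semipositive for every (K_1,K_2)-semipositive matrix B, then A(K_1) ⊆ K_2. -/

import Mathlib

open Matrix Set

/-- The nonnegative orthant in `ℝ^n`. -/
def posOrth (n : ℕ) : Set (Fin n → ℝ) := {x | ∀ i, 0 ≤ x i}

/-- A proper cone: closed, pointed convex cone with nonempty interior. -/
def IsProperCone {n : ℕ} (K : Set (Fin n → ℝ)) : Prop :=
  (∀ x ∈ K, ∀ y ∈ K, x + y ∈ K) ∧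
  (∀ (c : ℝ), 0 ≤ c → ∀ x ∈ K, c • x ∈ K) ∧
  IsClosed K ∧ K ∩ (-K) = {0} ∧ (interior K).Nonempty

/-- The dual cone of a set in `ℝ^n`. -/
def dualCone {n : ℕ} (K : Set (Fin n → ℝ)) : Set (Fin n → ℝ) :=
  {y | ∀ x ∈ K, 0 ≤ y ⬝ᵥ x}

/-- `(K₁,K₂)`-semipositivity of a matrix. -/
def SemiposCone {n m : ℕ} (K₁ : Set (Fin n → ℝ)) (K₂ : Set (Fin m → ℝ))
    (A : Matrix (Fin m) (Fin n) ℝ) : Prop :=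
  ∃ x ∈ interior K₁, A.mulVec x ∈ interior K₂

/-- Semipositivity with respect to the nonnegative orthants. -/
def Semipos {n m : ℕ} (A : Matrix (Fin m) (Fin n) ℝ) : Prop :=
  ∃ x : Fin n → ℝ, (∀ i, 0 < x i) ∧ ∀ j, 0 < A.mulVec x j

/-!
Suppose `x₀ ∈ K₁` but `A x₀ ∉ K₂`. Farkas' lemma gives a functional `f ≥ 0` on `K₂` with
`f (A x₀) < 0`; being nonzero, `f` is positive on the interior of `K₂`, in particular at some
`v ∈ int K₂`. The rank-one matrix `B x = -(f (A x) / f v) • v` makes `f ∘ (A + B)` vanish, so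
`A + B` maps no vector into `int K₂`. Yet `B` is semipositive: by convexity `x₀` lies in the
closure of `int K₁`, so some `x ∈ int K₁` still has `f (A x) < 0`, and then `B x` is a positive
multiple of `v`.
-/

namespace IsProperCone

variable {n : ℕ} {K : Set (Fin n → ℝ)}

lemma zero_mem (hK : IsProperCone K) : (0 : Fin n → ℝ) ∈ K :=
  (hK.2.2.2.1.ge rfl).1

def toProperCone (hK : IsProperCone K) : ProperCone ℝ (Fin n → ℝ) where
  carrier := K
  add_mem' hx hy := hK.1 _ hx _ hy
  zero_mem' := hK.zero_mem
  smul_mem' c _ hx := hK.2.1 c c.2 _ hx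
  isClosed' := hK.2.2.1

lemma convex (hK : IsProperCone K) : Convex ℝ K :=
  hK.toProperCone.convex

end IsProperCone

lemma PointedCone.smul_mem_interior {E : Type*} [AddCommGroup E] [TopologicalSpace E]
    [Module ℝ E] [ContinuousConstSMul ℝ E] (C : PointedCone ℝ E) {t : ℝ} (ht : 0 < t) {x : E}
    (hx : x ∈ interior (C : Set E)) : t • x ∈ interior (C : Set E) :=
  interior_maximal
    (image_subset_iff.2 fun _ hy ↦ C.smul_mem ht.le (interior_subset hy))
    (isOpenMap_smul₀ ht.ne' _ isOpen_interior) (mem_image_of_mem _ hx)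

lemma ContinuousLinearMap.pos_of_mem_interior {E : Type*} [AddCommGroup E] [TopologicalSpace E]
    [ContinuousAdd E] [Module ℝ E] [ContinuousSMul ℝ E] {f : E →L[ℝ] ℝ} (hf : f ≠ 0) {s : Set E}
    (hfs : ∀ x ∈ s, 0 ≤ f x) {x : E} (hx : x ∈ interior s) : 0 < f x := by
  have : f '' interior s ⊆ interior (Ici 0) :=
    interior_maximal (image_subset_iff.2 fun y hy ↦ hfs y (interior_subset hy))
      (f.isOpenMap_of_ne_zero hf _ isOpen_interior)
  simpa using this (mem_image_of_mem f hx)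

noncomputable def rankOneCorrection {ι κ : Type*} [Fintype ι] [DecidableEq ι]
    (f : (κ → ℝ) →ₗ[ℝ] ℝ) (A : Matrix κ ι ℝ) (v : κ → ℝ) : Matrix κ ι ℝ :=
  LinearMap.toMatrix' (-(f v)⁻¹ • (f ∘ₗ A.mulVecLin).smulRight v)

section rankOneCorrection

variable {ι κ : Type*} [Fintype ι] [DecidableEq ι]
  (f : (κ → ℝ) →ₗ[ℝ] ℝ) (A : Matrix κ ι ℝ) (v : κ → ℝ)

lemma rankOneCorrection_mulVec (x : ι → ℝ) :
    rankOneCorrection f A v *ᵥ x = -(f (A *ᵥ x) / f v) • v := by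
  rw [rankOneCorrection, LinearMap.toMatrix'_mulVec]
  simp [smul_smul, div_eq_inv_mul]

lemma apply_add_rankOneCorrection_mulVec [Fintype κ] {v : κ → ℝ} (hv : f v ≠ 0) (x : ι → ℝ) :
    f ((A + rankOneCorrection f A v) *ᵥ x) = 0 := by
  rw [add_mulVec, rankOneCorrection_mulVec, map_add, map_smul, smul_eq_mul, neg_mul,
    div_mul_cancel₀ _ hv, add_neg_cancel]

end rankOneCorrection

theorem stmt_16 {n m : ℕ} (K₁ : Set (Fin n → ℝ)) (K₂ : Set (Fin m → ℝ))
    (hK₁ : IsProperCone K₁) (hK₂ : IsProperCone K₂)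
    (A : Matrix (Fin m) (Fin n) ℝ)
    (h : ∀ B : Matrix (Fin m) (Fin n) ℝ, SemiposCone K₁ K₂ B →
      SemiposCone K₁ K₂ (A + B)) :
    ∀ x ∈ K₁, A.mulVec x ∈ K₂ := by
  intro x₀ hx₀
  by_contra hAx₀
  obtain ⟨f, hf_nonneg, hf_neg⟩ :=
    hK₂.toProperCone.hyperplane_separation_point (x₀ := A *ᵥ x₀) hAx₀
  have hf : f ≠ 0 := by rintro rfl; simp at hf_neg
  have hf_pos : ∀ y ∈ interior K₂, 0 < f y := fun y ↦ f.pos_of_mem_interior hf hf_nonneg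
  obtain ⟨v, hv⟩ := hK₂.2.2.2.2
  obtain ⟨x₁, hfAx₁, hx₁⟩ : ∃ x₁, f (A *ᵥ x₁) < 0 ∧ x₁ ∈ interior K₁ := by
    have : x₀ ∈ closure (interior K₁) := by
      rw [hK₁.convex.closure_interior_eq_closure_of_nonempty_interior hK₁.2.2.2.2]
      exact subset_closure hx₀
    exact mem_closure_iff.1 this _
      (isOpen_lt (f := fun x ↦ f (A *ᵥ x)) (by fun_prop) continuous_const) hf_neg
  set B := rankOneCorrection (f : (Fin m → ℝ) →ₗ[ℝ] ℝ) A v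
  have hB : SemiposCone K₁ K₂ B := by
    refine ⟨x₁, hx₁, ?_⟩
    rw [rankOneCorrection_mulVec]
    exact hK₂.toProperCone.toPointedCone.smul_mem_interior
      (neg_pos.2 (div_neg_of_neg_of_pos hfAx₁ (hf_pos v hv))) hv
  obtain ⟨z, -, hz⟩ := h B hB
  exact (hf_pos _ hz).ne' (apply_add_rankOneCorrection_mulVec _ A (hf_pos v hv).ne' z)
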